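/- Let W be any set and let κ : 𝓡 → W satisfy κ((I, t·e₃)·z) = κ(z) for all t ∈ ℝ and all z ∈ 𝓡 (invariance under the translation part of the stabilizer of η). Let s_a map each unit vector u to an element s_a(u) ∈ SO(3) with s_a(u)·e₃ = u, and define the section s((d,m)) = (s_a(d), d × m). Suppose x = (d_x, m_x) and y = (d_y, m_y) are rays whose underlying lines contain a common point c ∈ ℝ³ (that is, c × d_x = m_x and c × d_y = m_y). Then κ(s(x)⁻¹·y) = κ((s_a(d_x)⁻¹·d_y, 0)); i.e., on rays through a common point the pulled-back kernel argument depends only on the rotated direction s_a(d_x)⁻¹·d_y, so the intra-view ray-space convolution reduces to a spherical convolution. -/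

import Mathlib

noncomputable section
open scoped InnerProductSpace

/-- ℝ³ with the Euclidean norm. -/
abbrev E3 : Type := EuclideanSpace ℝ (Fin 3)

/-- Elements of SE(3): a pair of a 3×3 matrix and a translation vector. -/
abbrev SE3 : Type := Matrix (Fin 3) (Fin 3) ℝ × E3

/-- Matrix-vector multiplication on ℝ³. -/
def mv (R : Matrix (Fin 3) (Fin 3) ℝ) (v : E3) : E3 := WithLp.toLp 2 (R.mulVec v)

/-- Cross product on ℝ³. -/
def cross3 (a b : E3) : E3 :=
  WithLp.toLp 2 ![a 1 * b 2 - a 2 * b 1, a 2 * b 0 - a 0 * b 2, a 0 * b 1 - a 1 * b 0]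

/-- `R` is a special orthogonal 3×3 matrix: `RᵀR = I` and `det R = 1`. -/
def isSO3 (R : Matrix (Fin 3) (Fin 3) ℝ) : Prop :=
  R.transpose * R = 1 ∧ R.det = 1

/-- `(d, m)` are Plücker coordinates of an oriented line: `d` is a unit
direction and `m` is a moment with `⟨d, m⟩ = 0`. -/
def isRay (d m : E3) : Prop := ‖d‖ = 1 ∧ ⟪d, m⟫_ℝ = 0

/-- The standard basis vector e₁. -/
def e1 : E3 := WithLp.toLp 2 ![1, 0, 0]

/-- The standard basis vector e₂. -/
def e2 : E3 := WithLp.toLp 2 ![0, 1, 0]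

/-- The standard basis vector e₃. -/
def e3 : E3 := WithLp.toLp 2 ![0, 0, 1]

/-- Action of `(R, t) ∈ SE(3)` on Plücker coordinates:
`(R,t)·(d,m) = (Rd, Rm + t × (Rd))`. -/
def rayAct (R : Matrix (Fin 3) (Fin 3) ℝ) (t : E3) (d m : E3) : E3 × E3 :=
  (mv R d, mv R m + cross3 t (mv R d))

/-- Multiplication in SE(3): `(R₁,t₁)·(R₂,t₂) = (R₁R₂, t₁ + R₁t₂)`. -/
def se3Mul (g₁ g₂ : SE3) : SE3 := (g₁.1 * g₂.1, g₁.2 + mv g₁.1 g₂.2)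

/-- Inverse in SE(3) (for `g.1 ∈ SO(3)`): `(R,t)⁻¹ = (Rᵀ, -Rᵀt)`. -/
def se3Inv (g : SE3) : SE3 := (g.1.transpose, -(mv g.1.transpose g.2))

/-- Action of `g ∈ SE(3)` on the ray space. -/
def act (g : SE3) (x : E3 × E3) : E3 × E3 := rayAct g.1 g.2 x.1 x.2

/-- Action of `g = (R,t) ∈ SE(3)` on points of ℝ³: `g·p = Rp + t`. -/
def actPt (g : SE3) (p : E3) : E3 := mv g.1 p + g.2

/-- The origin ray `η = (e₃, 0)`. -/
def eta : E3 × E3 := (e3, 0)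

/-- The twist `h(g, x) = s(g·x)⁻¹ · g · s(x)` of a section `s`. -/
def twist (s : E3 × E3 → SE3) (g : SE3) (x : E3 × E3) : SE3 :=
  se3Mul (se3Inv (s (act g x))) (se3Mul g (s x))

/-- Rotation by γ about the z-axis. -/
def RZ (γ : ℝ) : Matrix (Fin 3) (Fin 3) ℝ :=
  !![Real.cos γ, -Real.sin γ, 0; Real.sin γ, Real.cos γ, 0; 0, 0, 1]

/-- Rotation by β about the y-axis. -/
def RY (β : ℝ) : Matrix (Fin 3) (Fin 3) ℝ :=
  !![Real.cos β, 0, Real.sin β; 0, 1, 0; -Real.sin β, 0, Real.cos β]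

/-- The underlying line of the ray with Plücker coordinates `(d, m)`:
`L(d,m) = {p : p × d = m}`. -/
def lineOf (d m : E3) : Set E3 := {p : E3 | cross3 p d = m}

/-- Infimum of the Euclidean distances between points of the line `L(d,m)`
and points of the z-axis. -/
def Dzaxis (d m : E3) : ℝ :=
  sInf {r : ℝ | ∃ p ∈ lineOf d m, ∃ s : ℝ, r = dist p (s • e3)}

/-- The z-coordinate `g(x) = e₃·(c - λ·d)` (with `c = d × m` and
`λ = ((e₁·c)(e₁·d) + (e₂·c)(e₂·d))/(1 - (e₃·d)²)`) of the point of `L(d,m)`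
closest to the z-axis (for `d ≠ ±e₃`). -/
def zfoot (d m : E3) : ℝ :=
  ⟪e3, cross3 d m - ((⟪e1, cross3 d m⟫_ℝ * ⟪e1, d⟫_ℝ + ⟪e2, cross3 d m⟫_ℝ * ⟪e2, d⟫_ℝ)
      / (1 - ⟪e3, d⟫_ℝ ^ 2)) • d⟫_ℝ

/-! The section `s(x) = (s_a(d_x), d_x × m_x)` sends `η` to `x`, so `s(x)⁻¹` maps the common
point `c` to the point `⟨d_x, c⟩ e₃` of the z-axis. A rigid motion `g` carries the ray through `c`
with direction `d` to the ray through `g·c` with direction `R d`; hence `s(x)⁻¹·y` is the ray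
through `⟨d_x, c⟩ e₃` with direction `s_a(d_x)ᵀ d_y`, which is the translate by `⟨d_x, c⟩ e₃` of the
ray through the origin with that direction, and translation invariance of `κ` concludes. -/

open Matrix WithLp

def rayThrough (c d : E3) : E3 × E3 := (d, cross3 c d)

lemma cross3_eq_crossProduct (a b : E3) : cross3 a b = toLp 2 (ofLp a ⨯₃ ofLp b) := by
  ext i; fin_cases i <;> simp [cross3, cross_apply]

lemma cross3_add_left (a a' b : E3) : cross3 (a + a') b = cross3 a b + cross3 a' b := by
  simp [cross3_eq_crossProduct, map_add]

lemma cross3_cross3_swap (u v : E3) : cross3 u (cross3 v u) = ‖u‖ ^ 2 • v - ⟪u, v⟫_ℝ • u := by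
  rw [← real_inner_self_eq_norm_sq]
  simp only [cross3_eq_crossProduct, cross_cross_eq_smul_sub_smul',
    EuclideanSpace.inner_eq_star_dotProduct, star_trivial, toLp_sub, toLp_smul, toLp_ofLp]

lemma inner_cross3_self_right (c d : E3) : ⟪d, cross3 c d⟫_ℝ = 0 := by
  simp [cross3_eq_crossProduct, EuclideanSpace.inner_eq_star_dotProduct, dotProduct_comm _ (ofLp d),
    dot_cross_self]

lemma mv_sub (R : Matrix (Fin 3) (Fin 3) ℝ) (u v : E3) : mv R (u - v) = mv R u - mv R v :=
  map_sub (toEuclideanLin R) u v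

lemma mv_smul (R : Matrix (Fin 3) (Fin 3) ℝ) (a : ℝ) (v : E3) : mv R (a • v) = a • mv R v :=
  map_smul (toEuclideanLin R) a v

lemma mv_mv (A B : Matrix (Fin 3) (Fin 3) ℝ) (v : E3) : mv A (mv B v) = mv (A * B) v := by
  simp [mv, mulVec_mulVec]

lemma mv_one (v : E3) : mv 1 v = v := by
  simp [mv]

lemma mv_transpose_cross3_mv (Q : Matrix (Fin 3) (Fin 3) ℝ) (a b : E3) :
    mv Qᵀ (cross3 (mv Q a) (mv Q b)) = Q.det • cross3 a b := by
  ext i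
  fin_cases i <;>
    simp only [mv, cross3, Fin.isValue, mulVec, dotProduct, Fin.sum_univ_three, Fin.zero_eta,
      Fin.mk_one, Fin.reduceFinMk, transpose_apply, cons_val_zero, cons_val_one, cons_val,
      det_fin_three, PiLp.smul_apply, smul_eq_mul] <;> ring

lemma inner_mv_mv {R : Matrix (Fin 3) (Fin 3) ℝ} (hR : Rᵀ * R = 1) (u v : E3) :
    ⟪mv R u, mv R v⟫_ℝ = ⟪u, v⟫_ℝ := by
  simp only [EuclideanSpace.inner_eq_star_dotProduct, star_trivial, mv]
  rw [dotProduct_mulVec, ← mulVec_transpose, mulVec_mulVec, hR, one_mulVec]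

lemma norm_mv {R : Matrix (Fin 3) (Fin 3) ℝ} (hR : Rᵀ * R = 1) (v : E3) : ‖mv R v‖ = ‖v‖ := by
  rw [norm_eq_sqrt_real_inner, norm_eq_sqrt_real_inner, inner_mv_mv hR]

namespace isSO3

variable {R : Matrix (Fin 3) (Fin 3) ℝ}

lemma mul_transpose (hR : isSO3 R) : R * Rᵀ = 1 := mul_eq_one_comm.mp hR.1

lemma transpose (hR : isSO3 R) : isSO3 Rᵀ :=
  ⟨by rw [transpose_transpose, hR.mul_transpose], by rw [det_transpose, hR.2]⟩

lemma mv_transpose_mv (hR : isSO3 R) (v : E3) : mv Rᵀ (mv R v) = v := by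
  rw [mv_mv, hR.1, mv_one]

lemma cross3_mv (hR : isSO3 R) (a b : E3) : cross3 (mv R a) (mv R b) = mv R (cross3 a b) := by
  have h := congrArg (mv R) (mv_transpose_cross3_mv R a b)
  rwa [hR.2, one_smul, mv_mv, hR.mul_transpose, mv_one] at h

end isSO3

lemma isRay_rayThrough {d : E3} (hd : ‖d‖ = 1) (c : E3) :
    isRay (rayThrough c d).1 (rayThrough c d).2 :=
  ⟨hd, inner_cross3_self_right c d⟩

lemma act_rayThrough {g : SE3} (hg : isSO3 g.1) (c d : E3) :
    act g (rayThrough c d) = rayThrough (actPt g c) (mv g.1 d) := by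
  simp only [act, rayAct, rayThrough, actPt, cross3_add_left, hg.cross3_mv]

lemma actPt_se3Inv_section {R : Matrix (Fin 3) (Fin 3) ℝ} (hR : isSO3 R) {dx : E3}
    (hdx : ‖dx‖ = 1) (hRe3 : mv R e3 = dx) (c : E3) :
    actPt (se3Inv (R, cross3 dx (cross3 c dx))) c = ⟪dx, c⟫_ℝ • e3 := by
  have he3 : mv Rᵀ dx = e3 := hRe3 ▸ hR.mv_transpose_mv e3
  rw [actPt, se3Inv, cross3_cross3_swap, hdx, one_pow, one_smul, mv_sub, mv_smul, he3,
    neg_sub, add_sub_cancel]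

/-- if `κ` is invariant under the translation part of the
stabilizer of `η`, then for rays `x`, `y` through a common point `c`, the
pulled-back kernel argument depends only on the rotated direction:
`κ(s(x)⁻¹·y) = κ((s_a(d_x)⁻¹·d_y, 0))`. -/
theorem statement17 {W : Type*} (κ : E3 × E3 → W)
    (sa : E3 → Matrix (Fin 3) (Fin 3) ℝ)
    (hsa : ∀ u : E3, ‖u‖ = 1 → isSO3 (sa u) ∧ mv (sa u) e3 = u)
    (hκ : ∀ t : ℝ, ∀ z : E3 × E3, isRay z.1 z.2 → κ (act (1, t • e3) z) = κ z)
    (dx mx dy my : E3) (hx : isRay dx mx) (hy : isRay dy my)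
    (c : E3) (hcx : cross3 c dx = mx) (hcy : cross3 c dy = my) :
    κ (act (se3Inv (sa dx, cross3 dx mx)) (dy, my))
      = κ (mv (sa dx).transpose dy, 0) := by
  obtain ⟨hR, hRe3⟩ := hsa dx hx.1
  subst hcx hcy
  set w := mv (sa dx)ᵀ dy
  have hw : ‖w‖ = 1 := by rw [norm_mv hR.transpose.1, hy.1]
  have hline : act (se3Inv (sa dx, cross3 dx (cross3 c dx))) (rayThrough c dy)
      = act (1, ⟪dx, c⟫_ℝ • e3) (rayThrough 0 w) := by
    rw [act_rayThrough hR.transpose, act_rayThrough ⟨by simp, by simp⟩,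
      actPt_se3Inv_section hR hx.1 hRe3]
    simp only [se3Inv, actPt, mv_one, zero_add, w]
  have horigin : rayThrough 0 w = (w, 0) := by
    simp [rayThrough, cross3_eq_crossProduct]
  rw [← horigin, ← hκ ⟪dx, c⟫_ℝ _ (isRay_rayThrough hw 0), ← hline]
  rfl

end
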